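/- arXiv:2111.06560 — 8 statements merged into one kernel-verified Lean document; each statement's English description precedes it below -/
import Mathlib

section
/- Let t and β be positive real numbers with t < 1, and define h : [0,∞) → [0,∞) by h(x) = max(x − β·x^t, 0). Let M ≥ 1 be an integer and let n = n_0, n_1, …, n_M be non-negative real numbers such that n_i ≥ 1 for every 0 ≤ i ≤ M−1, n_M < 1, and n_{i+1} ≤ h(n_i) for every 0 ≤ i ≤ M−1. Then M ≤ n^{1−t}/(β(1−t)) + 1. -/
/-!
Along the iteration the potential `a i ^ (1 - t)` drops by at least `β (1 - t)` at every step
that still starts and ends in `[1, ∞)`; this is the weighted AM–GM inequality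
`y ^ (1 - t) * x ^ t ≤ (1 - t) y + t x`. There are `M - 1` such steps and the potential stays
nonnegative, so `(M - 1) β (1 - t) ≤ a 0 ^ (1 - t)`.
-/

open Finset

lemma mul_one_sub_le_rpow_one_sub_sub_rpow {t β x y : ℝ} (ht0 : 0 ≤ t) (ht1 : t ≤ 1)
    (hx : 0 < x) (hy : 0 ≤ y) (hxy : y ≤ x - β * x ^ t) :
    β * (1 - t) ≤ x ^ (1 - t) - y ^ (1 - t) := by
  have hxt : 0 < x ^ t := Real.rpow_pos_of_pos hx t
  have hsplit : x ^ (1 - t) * x ^ t = x := by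
    rw [← Real.rpow_add hx, sub_add_cancel, Real.rpow_one]
  have hprod : y ^ (1 - t) * x ^ t ≤ (x ^ (1 - t) - β * (1 - t)) * x ^ t :=
    calc y ^ (1 - t) * x ^ t ≤ (1 - t) * y + t * x :=
          Real.geom_mean_le_arith_mean2_weighted (by linarith) ht0 hy hx.le (by ring)
      _ ≤ (1 - t) * (x - β * x ^ t) + t * x := by gcongr
      _ = (x ^ (1 - t) - β * (1 - t)) * x ^ t := by linear_combination -hsplit
  linarith [le_of_mul_le_mul_right hprod hxt]

lemma natCast_mul_le_sub_of_le_sub_succ {f : ℕ → ℝ} {c : ℝ} {n : ℕ}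
    (h : ∀ i < n, c ≤ f i - f (i + 1)) : n * c ≤ f 0 - f n := by
  rw [← sum_range_sub']
  simpa using card_nsmul_le_sum (range n) _ c fun i hi ↦ h i (mem_range.1 hi)

theorem iteration_sequence_length_bound_general
    (t β : ℝ) (ht0 : 0 < t) (ht1 : t < 1) (hβ : 0 < β)
    (M : ℕ) (hM : 1 ≤ M) (a : ℕ → ℝ)
    (hone : ∀ i < M, 1 ≤ a i)
    (hstep : ∀ i < M, a (i + 1) ≤ max (a i - β * a i ^ t) 0) :
    (M : ℝ) ≤ a 0 ^ (1 - t) / (β * (1 - t)) + 1 := by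
  obtain ⟨m, rfl⟩ := Nat.exists_eq_add_of_le' hM
  have hdrop : ∀ i < m, β * (1 - t) ≤ a i ^ (1 - t) - a (i + 1) ^ (1 - t) := by
    intro i hi
    have hnext : 1 ≤ a (i + 1) := hone (i + 1) (by omega)
    have hle : a (i + 1) ≤ a i - β * a i ^ t :=
      (le_max_iff.1 (hstep i (by omega))).resolve_right (not_le.2 (by linarith))
    exact mul_one_sub_le_rpow_one_sub_sub_rpow ht0.le ht1.le
      (by linarith [hone i (by omega)]) (by linarith) hle
  have htotal := natCast_mul_le_sub_of_le_sub_succ hdrop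
  have hlast : 0 ≤ a m ^ (1 - t) := Real.rpow_nonneg (by linarith [hone m (by omega)]) _
  have hpos : 0 < β * (1 - t) := mul_pos hβ (by linarith)
  have hm : (m : ℝ) ≤ a 0 ^ (1 - t) / (β * (1 - t)) := by
    rw [le_div_iff₀ hpos]; linarith
  push_cast
  linarith

/-- Iteration lemma for sequences dominated by `x ↦ max (x - β * x ^ t) 0`. -/
theorem iteration_sequence_length_bound
    (t β : ℝ) (ht0 : 0 < t) (ht1 : t < 1) (hβ : 0 < β)
    (M : ℕ) (hM : 1 ≤ M) (a : ℕ → ℝ)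
    (hnonneg : ∀ i ≤ M, 0 ≤ a i)
    (hone : ∀ i < M, 1 ≤ a i)
    (hlast : a M < 1)
    (hstep : ∀ i < M, a (i + 1) ≤ max (a i - β * a i ^ t) 0) :
    (M : ℝ) ≤ a 0 ^ (1 - t) / (β * (1 - t)) + 1 :=
  iteration_sequence_length_bound_general t β ht0 ht1 hβ M hM a hone hstep
end

section
/- Let t and β be positive real numbers with t < 1, and define h : [0,∞) → [0,∞) by h(x) = max(x − β·x^t, 0). Then for every real x ≥ 0 there exists a natural number m with m ≤ x^{1−t}/(β(1−t)) + 1 such that the m-fold iterate h^m(x) is strictly less than 1. -/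
/-!
The potential `V y = y ^ (1 - t) / (β * (1 - t))` drops by at least `1` with every step of
`h` that stays at height `≥ 1`: by concavity of `y ↦ y ^ (1 - t)`, the decrement
`β * y ^ t` of `y` costs at least `(1 - t) * y ^ (-t) * β * y ^ t = β * (1 - t)` of
`y ^ (1 - t)`. Since `[0, 1)` is invariant under `h`, after `⌊V x⌋₊ + 1` steps the
iterate has entered it.
-/

open Real Set

theorem Real.rpow_le_rpow_add_mul_sub {p x y : ℝ} (hp0 : 0 ≤ p) (hp1 : p ≤ 1) (hx : 0 < x)
    (hy : 0 ≤ y) : y ^ p ≤ x ^ p + p * x ^ (p - 1) * (y - x) := by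
  have hbernoulli : (y / x) ^ p ≤ 1 + p * (y / x - 1) := by
    simpa using rpow_one_add_le_one_add_mul_self (s := y / x - 1)
      (by linarith [div_nonneg hy hx.le]) hp0 hp1
  have hxp : x ^ (p - 1) = x ^ p / x := by rw [rpow_sub_one hx.ne']
  calc y ^ p = (y / x) ^ p * x ^ p := by
        rw [div_rpow hy hx.le, div_mul_cancel₀ _ (rpow_pos_of_pos hx p).ne']
    _ ≤ (1 + p * (y / x - 1)) * x ^ p :=
        mul_le_mul_of_nonneg_right hbernoulli (rpow_nonneg hx.le p)
    _ = x ^ p + p * x ^ (p - 1) * (y - x) := by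
        rw [hxp]; field_simp

theorem Real.rpow_sub_mul_rpow_le {t β x : ℝ} (ht0 : 0 ≤ t) (ht1 : t ≤ 1) (hx : 0 < x)
    (hy : 0 ≤ x - β * x ^ t) : (x - β * x ^ t) ^ (1 - t) ≤ x ^ (1 - t) - β * (1 - t) := by
  have hcancel : x ^ (1 - t - 1) * x ^ t = 1 := by
    rw [← rpow_add hx, show 1 - t - 1 + t = 0 by ring, rpow_zero]
  calc (x - β * x ^ t) ^ (1 - t)
      ≤ x ^ (1 - t) + (1 - t) * x ^ (1 - t - 1) * (x - β * x ^ t - x) :=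
        rpow_le_rpow_add_mul_sub (by linarith) (by linarith) hx hy
    _ = x ^ (1 - t) - β * (1 - t) * (x ^ (1 - t - 1) * x ^ t) := by ring
    _ = x ^ (1 - t) - β * (1 - t) := by rw [hcancel, mul_one]

theorem Function.iterate_mem_of_potential {α : Type*} {f : α → α} {s u : Set α} (V : α → ℝ)
    (hs : MapsTo f s s) (hu : MapsTo f u u) (hV : ∀ x ∈ s, 0 ≤ V x)
    (hdec : ∀ x ∈ s, x ∉ u → f x ∉ u → V (f x) ≤ V x - 1) :
    ∀ n : ℕ, ∀ x ∈ s, V x < n → f^[n] x ∈ u := by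
  intro n
  induction n with
  | zero => exact fun x hx hVx => absurd (hV x hx) (by simpa using hVx)
  | succ n ih =>
    intro x hx hVx
    by_cases hxu : x ∈ u
    · exact hu.iterate (n + 1) hxu
    rw [Function.iterate_succ_apply]
    by_cases hfxu : f x ∈ u
    · exact hu.iterate n hfxu
    refine ih (f x) (hs hx) ?_
    have := hdec x hx hxu hfxu
    push_cast at hVx
    linarith

/-- The map `h` of the statement. -/
noncomputable def subPowMap (β t y : ℝ) : ℝ := max (y - β * y ^ t) 0

section subPowMap

variable {β t : ℝ}

theorem subPowMap_nonneg (y : ℝ) : 0 ≤ subPowMap β t y := le_max_right _ _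

theorem subPowMap_le_self (hβ : 0 ≤ β) {y : ℝ} (hy : 0 ≤ y) : subPowMap β t y ≤ y :=
  max_le (by nlinarith [rpow_nonneg hy t]) hy

theorem mapsTo_subPowMap_Ici : MapsTo (subPowMap β t) (Ici 0) (Ici 0) :=
  fun y _ => subPowMap_nonneg y

theorem mapsTo_subPowMap_Ico (hβ : 0 ≤ β) : MapsTo (subPowMap β t) (Ico 0 1) (Ico 0 1) :=
  fun _ hy => ⟨subPowMap_nonneg _, (subPowMap_le_self hβ hy.1).trans_lt hy.2⟩

theorem rpow_subPowMap_le (hβ : 0 ≤ β) (ht0 : 0 ≤ t) (ht1 : t ≤ 1) {y : ℝ} (hy : 0 ≤ y)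
    (hfy : 0 < subPowMap β t y) : subPowMap β t y ^ (1 - t) ≤ y ^ (1 - t) - β * (1 - t) := by
  have hpos : 0 < y - β * y ^ t := by
    by_contra! hle
    exact hfy.ne' (max_eq_right hle)
  have hypos : 0 < y := hfy.trans_le (subPowMap_le_self hβ hy)
  rw [subPowMap, max_eq_left hpos.le]
  exact rpow_sub_mul_rpow_le ht0 ht1 hypos hpos.le

end subPowMap

/-- Iterating `h x = max (x - β * x ^ t) 0` drives any `x ≥ 0` below `1`
within `x ^ (1 - t) / (β * (1 - t)) + 1` steps. -/
theorem iterate_below_one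
    (t β : ℝ) (ht0 : 0 < t) (ht1 : t < 1) (hβ : 0 < β)
    (x : ℝ) (hx : 0 ≤ x) :
    ∃ m : ℕ, (m : ℝ) ≤ x ^ (1 - t) / (β * (1 - t)) + 1 ∧
      (fun y : ℝ => max (y - β * y ^ t) 0)^[m] x < 1 := by
  have hc : 0 < β * (1 - t) := mul_pos hβ (by linarith)
  set V : ℝ → ℝ := fun y => y ^ (1 - t) / (β * (1 - t)) with hV
  have hV0 : ∀ y ∈ Ici (0 : ℝ), 0 ≤ V y := fun y hy => div_nonneg (rpow_nonneg hy _) hc.le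
  have hdec : ∀ y ∈ Ici (0 : ℝ), y ∉ Ico 0 1 → subPowMap β t y ∉ Ico 0 1 →
      V (subPowMap β t y) ≤ V y - 1 := by
    intro y hy _ hfy
    have hfy1 : 1 ≤ subPowMap β t y := by simpa [subPowMap_nonneg] using hfy
    have := rpow_subPowMap_le hβ.le ht0.le ht1.le hy (by linarith)
    rw [hV, le_sub_iff_add_le, div_add_one hc.ne']
    exact div_le_div_of_nonneg_right (by linarith) hc.le
  refine ⟨⌊V x⌋₊ + 1, by push_cast; linarith [Nat.floor_le (hV0 x hx)], ?_⟩
  exact (Function.iterate_mem_of_potential V mapsTo_subPowMap_Ici (mapsTo_subPowMap_Ico hβ.le)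
    hV0 hdec _ x hx (by push_cast; exact Nat.lt_floor_add_one _)).2
end

section
/- Let 0 < t < 1 and β > 0 be real numbers, and let H be a hypergraph on a finite vertex set V with |V| = n ≥ 1. Suppose that for every nonempty subset S ⊆ V, there is a subset of S of size at least β·|S|^t that contains no hyperedge of H that is contained in S. Then H admits a proper coloring using at most n^{1−t}/(β(1−t)) + 1 colors. -/
/-!
Greedily remove from what is left of `V`, say `S`, an independent set of size at least
`β |S| ^ t` and give it a fresh colour. By concavity of `x ↦ x ^ (1 - t)`, each removal lowers the
potential `|S| ^ (1 - t)` by at least `β (1 - t)`, so at most `n ^ (1 - t) / (β (1 - t))` removals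
empty `V`.
-/

open Finset

lemma rpow_sub_le_sub_mul_rpow_sub_one {p s i : ℝ} (hp0 : 0 ≤ p) (hp1 : p ≤ 1) (hs : 0 < s)
    (hi : i ≤ s) : (s - i) ^ p ≤ s ^ p - p * i * s ^ (p - 1) := by
  have hu : i / s ≤ 1 := div_le_one_of_le₀ hi hs.le
  have hbernoulli : (1 + -(i / s)) ^ p ≤ 1 + p * -(i / s) :=
    rpow_one_add_le_one_add_mul_self (neg_le_neg hu) hp0 hp1
  calc (s - i) ^ p = (s * (1 + -(i / s))) ^ p := by congr 1; field_simp; ring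
    _ = s ^ p * (1 + -(i / s)) ^ p := Real.mul_rpow hs.le (by linarith)
    _ ≤ s ^ p * (1 + p * -(i / s)) := by gcongr
    _ = s ^ p - p * i * s ^ (p - 1) := by rw [Real.rpow_sub_one hs.ne']; field_simp; ring

lemma rpow_one_sub_sub_add_le {t β s i : ℝ} (ht0 : 0 ≤ t) (ht1 : t ≤ 1) (hs : 0 < s)
    (hi : i ≤ s) (hβi : β * s ^ t ≤ i) : (s - i) ^ (1 - t) + β * (1 - t) ≤ s ^ (1 - t) := by
  have hβ : β ≤ i * s ^ (-t) := by
    calc β = β * s ^ t * s ^ (-t) := by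
          rw [mul_assoc, ← Real.rpow_add hs, add_neg_cancel, Real.rpow_zero, mul_one]
      _ ≤ i * s ^ (-t) := by gcongr
  have hconcave := rpow_sub_le_sub_mul_rpow_sub_one (p := 1 - t) (by linarith) (by linarith) hs hi
  rw [sub_sub_cancel_left] at hconcave
  have hscaled := mul_le_mul_of_nonneg_left hβ (sub_nonneg.2 ht1)
  linarith

section Coloring

variable {α : Type*} [DecidableEq α]

def IsProperColoringOn {κ : Type*} (H : Finset (Finset α)) (S : Finset α) (c : α → κ) : Prop :=
  ∀ e ∈ H, e ⊆ S → ¬ ∃ j, ∀ v ∈ e, c v = j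

lemma IsProperColoringOn.of_sdiff {H : Finset (Finset α)} {S I : Finset α} {m : ℕ}
    {c : α → Fin m} (hc : IsProperColoringOn H (S \ I) c) (hI : ∀ e ∈ H, ¬ e ⊆ I) :
    IsProperColoringOn H S fun v ↦ if v ∈ I then Fin.last m else (c v).castSucc := by
  rintro e he heS ⟨j, hj⟩
  induction j using Fin.lastCases with
  | last =>
    exact hI e he fun v hv ↦ by
      by_contra hvI
      simpa [hvI] using hj v hv
  | cast j =>
    have heI : ∀ v ∈ e, v ∉ I := fun v hv hvI ↦
      (Fin.castSucc_lt_last j).ne' (by simpa [hvI] using hj v hv)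
    refine hc e he (fun v hv ↦ mem_sdiff.2 ⟨heS hv, heI v hv⟩) ⟨j, fun v hv ↦ ?_⟩
    simpa [heI v hv] using hj v hv

theorem exists_isProperColoringOn_of_potential_drop {H : Finset (Finset α)} {V : Finset α}
    (hH : ∅ ∉ H) {φ : Finset α → ℝ} {δ : ℝ}
    (hstep : ∀ S ⊆ V, S.Nonempty →
      ∃ I ⊆ S, I.Nonempty ∧ (∀ e ∈ H, ¬ e ⊆ I) ∧ φ (S \ I) + δ ≤ φ S) :
    ∀ S ⊆ V, ∃ (m : ℕ) (c : α → Fin (m + 1)), m * δ ≤ φ S - φ ∅ ∧ IsProperColoringOn H S c := by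
  intro S
  induction S using Finset.strongInduction with
  | H S ih =>
  intro hSV
  rcases S.eq_empty_or_nonempty with rfl | hS
  · refine ⟨0, fun _ ↦ 0, by simp, fun e he heS ↦ ?_⟩
    rw [subset_empty.1 heS] at he
    exact absurd he hH
  obtain ⟨I, hIS, hI, hIind, hφ⟩ := hstep S hSV hS
  obtain ⟨m, c, hm, hc⟩ := ih (S \ I) (sdiff_ssubset hIS hI) (sdiff_subset.trans hSV)
  refine ⟨m + 1, _, ?_, hc.of_sdiff hIind⟩
  push_cast
  linarith

end Coloring

/-- If every nonempty induced subhypergraph on `S` has an independent set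
of size at least `β * |S| ^ t`, then the hypergraph has a proper coloring with at most
`n ^ (1 - t) / (β * (1 - t)) + 1` colors. -/
theorem chromatic_bound_from_hereditary_independence
    {α : Type*} [DecidableEq α]
    (t β : ℝ) (ht0 : 0 < t) (ht1 : t < 1) (hβ : 0 < β)
    (V : Finset α) (H : Finset (Finset α)) (hHV : ∀ e ∈ H, e ⊆ V)
    (n : ℕ) (hn : V.card = n) (hn1 : 1 ≤ n)
    (hind : ∀ S ⊆ V, S.Nonempty →
      ∃ I ⊆ S, β * (S.card : ℝ) ^ t ≤ (I.card : ℝ) ∧ ∀ e ∈ H, e ⊆ S → ¬ e ⊆ I) :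
    ∃ (m : ℕ) (c : α → Fin m),
      (m : ℝ) ≤ (n : ℝ) ^ (1 - t) / (β * (1 - t)) + 1 ∧
      ∀ e ∈ H, ¬ ∃ j, ∀ v ∈ e, c v = j := by
  have hH : ∅ ∉ H := fun h ↦ by
    obtain ⟨I, -, -, hI⟩ := hind V subset_rfl (card_pos.1 (hn ▸ hn1))
    exact hI ∅ h (empty_subset _) (empty_subset _)
  have hstep : ∀ S ⊆ V, S.Nonempty → ∃ I ⊆ S, I.Nonempty ∧ (∀ e ∈ H, ¬ e ⊆ I) ∧
      ((S \ I).card : ℝ) ^ (1 - t) + β * (1 - t) ≤ (S.card : ℝ) ^ (1 - t) := by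
    intro S hSV hS
    obtain ⟨I, hIS, hIcard, hI⟩ := hind S hSV hS
    have hSpos : (0 : ℝ) < S.card := by exact_mod_cast hS.card_pos
    refine ⟨I, hIS, card_pos.1 ?_, fun e he heI ↦ hI e he (heI.trans hIS) heI, ?_⟩
    · exact_mod_cast (mul_pos hβ (Real.rpow_pos_of_pos hSpos t)).trans_le hIcard
    · rw [card_sdiff_of_subset hIS, Nat.cast_sub (card_le_card hIS)]
      exact rpow_one_sub_sub_add_le ht0.le ht1.le hSpos (by exact_mod_cast card_le_card hIS)
        hIcard
  obtain ⟨m, c, hm, hc⟩ := exists_isProperColoringOn_of_potential_drop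
    (φ := fun S ↦ (S.card : ℝ) ^ (1 - t)) hH hstep V subset_rfl
  refine ⟨m + 1, c, ?_, fun e he ↦ hc e he (hHV e he)⟩
  rw [hn, card_empty, Nat.cast_zero, Real.zero_rpow (by linarith), sub_zero] at hm
  have hm' := (le_div_iff₀ (mul_pos hβ (by linarith))).2 hm
  push_cast
  linarith
end

section
/- Let d ≥ 3 be an integer and let H be a (d+1)-uniform hypergraph on a finite vertex set V with |V| = n ≥ 1 such that for every subset S ⊆ V, the number of hyperedges of H contained in S is at most (d+1)·|S|^{⌈d/2⌉}. Then the chromatic number of H satisfies χ(H) ≤ ((d+1)^{(d+2)/d} / (⌈d/2⌉ − 1)) · n^{(⌈d/2⌉−1)/d} + 1. -/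
/-!
Colour greedily, spending one colour per round on an independent set. If the current vertex set
has `s` vertices, keep each of them independently with probability `p` and delete one vertex from
every edge that survives: in expectation at least `p s - (d + 1) s ^ k p ^ (d + 1)` vertices remain
(`k = ⌈d / 2⌉`), and for the optimal `p` this is `d (d + 1) ^ (-(d + 2) / d) s ^ (1 - (k - 1) / d)`.
By concavity of `x ↦ x ^ ((k - 1) / d)`, removing that many vertices lowers `C s ^ ((k - 1) / d)`
by at least `1`, so induction on `s` bounds the number of colours by `C n ^ ((k - 1) / d) + 1`.
-/

open Finset Real

theorem mul_sub_mul_rpow_le_rpow_sub_rpow {γ x y : ℝ} (hγ0 : 0 ≤ γ) (hγ1 : γ ≤ 1) (hy : 0 ≤ y)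
    (hx : 0 < x) : γ * (x - y) * x ^ (γ - 1) ≤ x ^ γ - y ^ γ := by
  have hamgm := geom_mean_le_arith_mean2_weighted hγ0 (sub_nonneg.2 hγ1) hy hx.le
    (add_sub_cancel γ 1)
  have := mul_le_mul_of_nonneg_right hamgm (rpow_nonneg hx.le (γ - 1))
  rw [mul_assoc, ← rpow_add hx, sub_add_sub_cancel', sub_self, rpow_zero, mul_one] at this
  have hxγ : x * x ^ (γ - 1) = x ^ γ := by rw [rpow_sub_one hx.ne', mul_div_cancel₀ _ hx.ne']
  linear_combination this + hxγ

noncomputable def deyPachBound (d k : ℕ) (x : ℝ) : ℝ :=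
  ((d : ℝ) + 1) ^ (((d : ℝ) + 2) / (d : ℝ)) / ((k : ℝ) - 1) * x ^ (((k : ℝ) - 1) / (d : ℝ))

theorem exists_prob_mul_sub_mul_pow_eq {d k : ℕ} (hd : 1 ≤ d) (hk : 1 ≤ k) {s : ℝ} (hs : 1 ≤ s) :
    ∃ p : ℝ, 0 < p ∧ p < 1 ∧ p * s - (d + 1) * s ^ k * p ^ (d + 1)
      = d * s ^ (1 - ((k : ℝ) - 1) / d) / ((d : ℝ) + 1) ^ (((d : ℝ) + 2) / d) := by
  have hs0 : 0 < s := by linarith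
  have hd0 : (0 : ℝ) < d := by exact_mod_cast hd
  have hk1 : (1 : ℝ) ≤ k := by exact_mod_cast hk
  set γ : ℝ := ((k : ℝ) - 1) / d
  set a : ℝ := ((d : ℝ) + 1) ^ (2 / d : ℝ)
  set t : ℝ := s ^ γ
  have ha : 1 < a := one_lt_rpow (by linarith) (by positivity)
  have ht : 1 ≤ t := one_le_rpow hs (div_nonneg (by linarith) hd0.le)
  have had : a ^ d = (d + 1) ^ 2 := by
    rw [← rpow_natCast, ← rpow_mul (by positivity), div_mul_cancel₀ _ hd0.ne']
    norm_cast
  have hsk : s ^ k = s * t ^ d := by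
    rw [← rpow_natCast t, ← rpow_mul hs0.le, div_mul_cancel₀ _ hd0.ne', ← rpow_natCast,
      ← rpow_one_add' hs0.le (by linarith), add_sub_cancel]
  have hC : ((d : ℝ) + 1) ^ (((d : ℝ) + 2) / d) = (d + 1) * a := by
    rw [add_div, div_self hd0.ne', rpow_add (by positivity), rpow_one]
  -- `(a * t)⁻¹` is the maximizer of `p ↦ p * s - (d + 1) * s ^ k * p ^ (d + 1)`.
  refine ⟨(a * t)⁻¹, by positivity, inv_lt_one_of_one_lt₀ (one_lt_mul_of_lt_of_le ha ht), ?_⟩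
  rw [hC, rpow_sub hs0, rpow_one, hsk, inv_pow, mul_pow, pow_succ, pow_succ, had]
  field_simp
  ring

theorem deyPachBound_sub_add_one_le {d k : ℕ} (hd : 1 ≤ d) (hk : 2 ≤ k) (hkd : k ≤ d + 1)
    {s b : ℝ} (hs : 0 < s) (hbs : b ≤ s)
    (hb : d * s ^ (1 - ((k : ℝ) - 1) / d) / ((d : ℝ) + 1) ^ (((d : ℝ) + 2) / d) ≤ b) :
    deyPachBound d k (s - b) + 1 ≤ deyPachBound d k s := by
  have hd0 : (0 : ℝ) < d := by exact_mod_cast hd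
  have hk1 : (1 : ℝ) < k := by exact_mod_cast hk
  set γ : ℝ := ((k : ℝ) - 1) / d
  set E : ℝ := ((d : ℝ) + 1) ^ (((d : ℝ) + 2) / d)
  have hE : 0 < E := by positivity
  have hC : 0 < E / (k - 1) := div_pos hE (by linarith)
  have hconc := mul_sub_mul_rpow_le_rpow_sub_rpow (γ := γ) (x := s) (y := s - b)
    (div_nonneg (by linarith) hd0.le)
    ((div_le_one hd0).2 (by linarith [show (k : ℝ) ≤ d + 1 by exact_mod_cast hkd]))
    (sub_nonneg.2 hbs) hs
  rw [sub_sub_cancel] at hconc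
  have hgain : 1 ≤ E / (k - 1) * (γ * b * s ^ (γ - 1)) := calc
    1 = E / (k - 1) * (γ * (d * s ^ (1 - γ) / E) * s ^ (γ - 1)) := by
      rw [mul_assoc γ, mul_div_right_comm, mul_assoc, ← rpow_add hs, sub_add_sub_cancel', sub_self,
        rpow_zero, mul_one]
      have : (k : ℝ) - 1 ≠ 0 := by linarith
      simp only [γ]
      field_simp
    _ ≤ E / (k - 1) * (γ * b * s ^ (γ - 1)) := by gcongr
  change E / (k - 1) * (s - b) ^ γ + 1 ≤ E / (k - 1) * s ^ γ
  nlinarith [mul_le_mul_of_nonneg_left hconc hC.le]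

section Hypergraph

variable {α : Type*} [DecidableEq α]

def IsIndepSet (H : Finset (Finset α)) (B : Finset α) : Prop := ∀ e ∈ H, ¬ e ⊆ B

-- `p ^ #A * (1 - p) ^ #(S \ A)` is the probability that a `p`-random subset of `S` equals `A`.
theorem sum_powerset_filter_superset_weight (p : ℝ) {S e : Finset α} (he : e ⊆ S) :
    ∑ A ∈ S.powerset with e ⊆ A, p ^ #A * (1 - p) ^ #(S \ A) = p ^ #e := by
  have key := prod_add (fun _ ↦ p) (fun i ↦ if i ∉ e then 1 - p else 0) S
  have hfactor (i : α) : p + (if i ∉ e then 1 - p else 0) = if i ∈ e then p else 1 := by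
    split_ifs <;> ring
  have hterm (A : Finset α) : (∏ _ ∈ A, p) * ∏ i ∈ S \ A, (if i ∉ e then 1 - p else 0)
      = if e ⊆ A then p ^ #A * (1 - p) ^ #(S \ A) else 0 := by
    have hcover : (∀ i ∈ S \ A, i ∉ e) ↔ e ⊆ A :=
      ⟨fun h i hi ↦ by_contra fun hiA ↦ h i (mem_sdiff.2 ⟨he hi, hiA⟩) hi,
        fun h i hi hie ↦ (mem_sdiff.1 hi).2 (h hie)⟩
    rw [prod_const, prod_ite_zero, prod_const, mul_ite, mul_zero]
    exact if_congr hcover rfl rfl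
  simp_rw [hterm, hfactor, prod_ite_mem, inter_eq_right.2 he, prod_const] at key
  rw [sum_filter, ← key]

theorem sum_powerset_weight_mul_card_filter {ι : Type*} (p : ℝ) {S : Finset α} {t : Finset ι}
    {f : ι → Finset α} (hf : ∀ i ∈ t, f i ⊆ S) :
    ∑ A ∈ S.powerset, p ^ #A * (1 - p) ^ #(S \ A) * #{i ∈ t | f i ⊆ A} = ∑ i ∈ t, p ^ #(f i) := by
  simp_rw [card_filter, Nat.cast_sum, mul_sum, Nat.cast_ite, Nat.cast_one, Nat.cast_zero,
    mul_ite, mul_one, mul_zero]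
  rw [sum_comm]
  exact sum_congr rfl fun i hi ↦ by
    rw [← sum_filter, sum_powerset_filter_superset_weight p (hf i hi)]

theorem exists_subset_card_sub_card_filter_ge {S : Finset α} {F : Finset (Finset α)}
    (hFS : ∀ e ∈ F, e ⊆ S) {p : ℝ} (hp0 : 0 < p) (hp1 : p < 1) :
    ∃ A ⊆ S, p * #S - ∑ e ∈ F, p ^ #e ≤ #A - #{e ∈ F | e ⊆ A} := by
  set w : Finset α → ℝ := fun A ↦ p ^ #A * (1 - p) ^ #(S \ A)
  have hw_pos (A : Finset α) : 0 < w A := by have := sub_pos.2 hp1; positivity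
  have hw_sum : ∑ A ∈ S.powerset, w A = 1 := by
    simpa using sum_powerset_filter_superset_weight p (empty_subset S)
  have hcard (A : Finset α) (hA : A ⊆ S) : #{v ∈ S | {v} ⊆ A} = #A := by
    simp only [singleton_subset_iff, filter_mem_eq_inter, inter_eq_right.2 hA]
  have hmean : ∑ A ∈ S.powerset, w A * (#A - #{e ∈ F | e ⊆ A} : ℝ) = p * #S - ∑ e ∈ F, p ^ #e := by
    have hsingle := sum_powerset_weight_mul_card_filter p (t := S) (f := singleton)
      (fun v hv ↦ singleton_subset_iff.2 hv)
    have hedges := sum_powerset_weight_mul_card_filter p (f := id) hFS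
    simp only [card_singleton, pow_one, sum_const, nsmul_eq_mul, id] at hsingle hedges
    rw [sum_congr rfl fun A hA ↦ by rw [hcard A (mem_powerset.1 hA)]] at hsingle
    simp_rw [mul_sub, sum_sub_distrib, w, hsingle, hedges, mul_comm]
  obtain ⟨A, hA, hle⟩ := exists_le_of_sum_le (powerset_nonempty S)
    (f := fun A ↦ w A * (p * #S - ∑ e ∈ F, p ^ #e))
    (g := fun A ↦ w A * (#A - #{e ∈ F | e ⊆ A} : ℝ)) (by rw [← sum_mul, hw_sum, one_mul, hmean])
  exact ⟨A, mem_powerset.1 hA, le_of_mul_le_mul_left hle (hw_pos A)⟩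

theorem exists_hittingSet_card_le {F : Finset (Finset α)} (hF : ∀ e ∈ F, e.Nonempty) :
    ∃ T : Finset α, #T ≤ #F ∧ ∀ e ∈ F, ∃ v ∈ e, v ∈ T := by
  choose f hf using fun e : F ↦ hF e e.2
  exact ⟨F.attach.image f, card_image_le.trans_eq card_attach,
    fun e he ↦ ⟨f ⟨e, he⟩, hf _, mem_image_of_mem _ (mem_attach _ _)⟩⟩

theorem exists_indepSet_subset_card_le_add {F : Finset (Finset α)} (hF : ∀ e ∈ F, e.Nonempty)
    (A : Finset α) : ∃ B ⊆ A, IsIndepSet F B ∧ #A ≤ #B + #{e ∈ F | e ⊆ A} := by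
  obtain ⟨T, hTcard, hT⟩ := exists_hittingSet_card_le (F := {e ∈ F | e ⊆ A})
    fun e he ↦ hF e (mem_filter.1 he).1
  refine ⟨A \ T, sdiff_subset, fun e he heB ↦ ?_, card_le_card_sdiff_add_card.trans (by gcongr)⟩
  obtain ⟨v, hve, hvT⟩ := hT e (mem_filter.2 ⟨he, heB.trans sdiff_subset⟩)
  exact (mem_sdiff.1 (heB hve)).2 hvT

theorem exists_indepSet_card_ge {S : Finset α} {F : Finset (Finset α)} (hFS : ∀ e ∈ F, e ⊆ S)
    (hF : ∀ e ∈ F, e.Nonempty) {p : ℝ} (hp0 : 0 < p) (hp1 : p < 1) :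
    ∃ B ⊆ S, IsIndepSet F B ∧ p * #S - ∑ e ∈ F, p ^ #e ≤ #B := by
  obtain ⟨A, hAS, hA⟩ := exists_subset_card_sub_card_filter_ge hFS hp0 hp1
  obtain ⟨B, hBA, hB, hcard⟩ := exists_indepSet_subset_card_le_add hF A
  refine ⟨B, hBA.trans hAS, hB, hA.trans ?_⟩
  rw [sub_le_iff_le_add]
  exact_mod_cast hcard

theorem exists_indepSet_card_ge_of_card_filter_le {d : ℕ} {H : Finset (Finset α)}
    (hH : ∀ e ∈ H, d + 1 ≤ #e) {S : Finset α} {M : ℝ} (hM : #{e ∈ H | e ⊆ S} ≤ M)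
    {p : ℝ} (hp0 : 0 < p) (hp1 : p < 1) :
    ∃ B ⊆ S, IsIndepSet H B ∧ p * #S - M * p ^ (d + 1) ≤ #B := by
  obtain ⟨B, hBS, hB, hcard⟩ := exists_indepSet_card_ge (F := {e ∈ H | e ⊆ S})
    (fun e he ↦ (mem_filter.1 he).2)
    (fun e he ↦ card_pos.1 (by have := hH e (mem_filter.1 he).1; omega)) hp0 hp1
  refine ⟨B, hBS, fun e he heB ↦ hB e (mem_filter.2 ⟨he, heB.trans hBS⟩) heB, le_trans ?_ hcard⟩
  have hsum : ∑ e ∈ H with e ⊆ S, p ^ #e ≤ M * p ^ (d + 1) := calc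
    _ ≤ ∑ e ∈ H with e ⊆ S, p ^ (d + 1) :=
      sum_le_sum fun e he ↦ pow_le_pow_of_le_one hp0.le hp1.le (hH e (mem_filter.1 he).1)
    _ = #{e ∈ H | e ⊆ S} * p ^ (d + 1) := by rw [sum_const, nsmul_eq_mul]
    _ ≤ M * p ^ (d + 1) := by gcongr
  linarith

theorem exists_coloring_of_exists_indepSet {H : Finset (Finset α)} (hH : ∀ e ∈ H, e.Nonempty)
    (Φ : ℝ → ℝ) (hΦ : 0 ≤ Φ 0) (V : Finset α)
    (hstep : ∀ S ⊆ V, S.Nonempty → ∃ B ⊆ S, IsIndepSet H B ∧ Φ (#S - #B) + 1 ≤ Φ #S) :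
    ∃ (m : ℕ) (c : α → Fin m), (∀ e ∈ H, e ⊆ V → ¬ ∃ j, ∀ v ∈ e, c v = j) ∧ m ≤ Φ #V + 1 := by
  induction V using Finset.strongInduction with | H S ih =>
  rcases S.eq_empty_or_nonempty with rfl | hS
  · refine ⟨1, fun _ ↦ 0, fun e he heS ↦ ?_, by simpa using hΦ⟩
    exact absurd (subset_empty.1 heS) (hH e he).ne_empty
  obtain ⟨B, hBS, hB, hΦB⟩ := hstep S subset_rfl hS
  have hB_ne : B.Nonempty := by
    rw [nonempty_iff_ne_empty]
    rintro rfl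
    norm_num at hΦB
  obtain ⟨m, c, hc, hm⟩ :=
    ih (S \ B) (sdiff_ssubset hBS hB_ne) fun T hT ↦ hstep T (hT.trans sdiff_subset)
  refine ⟨m + 1, fun v ↦ if v ∈ B then Fin.last m else (c v).castSucc, ?_, ?_⟩
  · rintro e he heS ⟨j, hj⟩
    obtain ⟨u, hue, huB⟩ := not_subset.1 (hB e he)
    have hu : j = (c u).castSucc := by simpa [huB] using (hj u hue).symm
    have hv (v : α) (hv : v ∈ e) : v ∉ B ∧ c v = c u := by
      have : (if v ∈ B then Fin.last m else (c v).castSucc) = j := hj v hv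
      split_ifs at this with hvB
      · exact absurd (this.trans hu) (Fin.castSucc_lt_last _).ne'
      · exact ⟨hvB, Fin.castSucc_injective _ (this.trans hu)⟩
    exact hc e he (fun v hv' ↦ mem_sdiff.2 ⟨heS hv', (hv v hv').1⟩) ⟨c u, fun v hv' ↦ (hv v hv').2⟩
  · rw [card_sdiff_of_subset hBS, Nat.cast_sub (card_le_card hBS)] at hm
    push_cast
    linarith

theorem exists_indepSet_deyPachBound_sub_add_one_le {d k : ℕ} (hd : 1 ≤ d) (hk : 2 ≤ k)
    (hkd : k ≤ d + 1) {H : Finset (Finset α)} (hH : ∀ e ∈ H, d + 1 ≤ #e) {S : Finset α}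
    (hS : S.Nonempty) (hcount : (#{e ∈ H | e ⊆ S} : ℝ) ≤ (d + 1) * #S ^ k) :
    ∃ B ⊆ S, IsIndepSet H B ∧ deyPachBound d k (#S - #B) + 1 ≤ deyPachBound d k #S := by
  obtain ⟨p, hp0, hp1, hp⟩ := exists_prob_mul_sub_mul_pow_eq (k := k) hd (by omega) (s := #S)
    (by exact_mod_cast hS.card_pos)
  obtain ⟨B, hBS, hB, hBcard⟩ := exists_indepSet_card_ge_of_card_filter_le hH hcount hp0 hp1
  exact ⟨B, hBS, hB, deyPachBound_sub_add_one_le hd hk hkd (by exact_mod_cast hS.card_pos)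
    (by exact_mod_cast card_le_card hBS) (hp.symm.trans_le hBcard)⟩

end Hypergraph

theorem chromatic_bound_dey_pach_general
    {α : Type*} [DecidableEq α] (d : ℕ) (hd : 3 ≤ d)
    (V : Finset α) (H : Finset (Finset α)) (hHV : ∀ e ∈ H, e ⊆ V)
    (hunif : ∀ e ∈ H, e.card = d + 1)
    (n : ℕ) (hn : V.card = n)
    (hcount : ∀ S ⊆ V,
      ((H.filter fun e => e ⊆ S).card : ℝ) ≤ ((d : ℝ) + 1) * (S.card : ℝ) ^ ((d + 1) / 2 : ℕ)) :
    ∃ (m : ℕ) (c : α → Fin m),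
      (∀ e ∈ H, ¬ ∃ j, ∀ v ∈ e, c v = j) ∧
      (m : ℝ) ≤ ((d : ℝ) + 1) ^ (((d : ℝ) + 2) / (d : ℝ)) / ((((d + 1) / 2 : ℕ) : ℝ) - 1)
          * (n : ℝ) ^ (((((d + 1) / 2 : ℕ) : ℝ) - 1) / (d : ℝ)) + 1 := by
  set k := (d + 1) / 2 with hk_def
  have hk : 2 ≤ k := by omega
  have hγ : ((k : ℝ) - 1) / d ≠ 0 :=
    div_ne_zero (by linarith [show (2 : ℝ) ≤ k by exact_mod_cast hk]) (by positivity)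
  obtain ⟨m, c, hc, hm⟩ := exists_coloring_of_exists_indepSet
    (fun e he ↦ card_pos.1 (by rw [hunif e he]; omega)) (deyPachBound d k)
    (by simp [deyPachBound, zero_rpow hγ]) V fun S hSV hS ↦
      exists_indepSet_deyPachBound_sub_add_one_le (by omega) hk (by omega)
        (fun e he ↦ (hunif e he).ge) hS (hcount S hSV)
  exact ⟨m, c, fun e he ↦ hc e he (hHV e he), hn ▸ hm⟩

/-- Chromatic number bound for `(d+1)`-uniform hypergraphs whose induced
subhypergraphs satisfy the Dey–Pach-type edge count `(d+1) * |S| ^ ⌈d/2⌉`. -/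
theorem chromatic_bound_dey_pach
    {α : Type*} [DecidableEq α] (d : ℕ) (hd : 3 ≤ d)
    (V : Finset α) (H : Finset (Finset α)) (hHV : ∀ e ∈ H, e ⊆ V)
    (hunif : ∀ e ∈ H, e.card = d + 1)
    (n : ℕ) (hn : V.card = n) (hn1 : 1 ≤ n)
    (hcount : ∀ S ⊆ V,
      ((H.filter fun e => e ⊆ S).card : ℝ) ≤ ((d : ℝ) + 1) * (S.card : ℝ) ^ ((d + 1) / 2 : ℕ)) :
    ∃ (m : ℕ) (c : α → Fin m),
      (∀ e ∈ H, ¬ ∃ j, ∀ v ∈ e, c v = j) ∧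
      (m : ℝ) ≤ ((d : ℝ) + 1) ^ (((d : ℝ) + 2) / (d : ℝ)) / ((((d + 1) / 2 : ℕ) : ℝ) - 1)
          * (n : ℝ) ^ (((((d + 1) / 2 : ℕ) : ℝ) - 1) / (d : ℝ)) + 1 :=
  chromatic_bound_dey_pach_general d hd V H hHV hunif n hn hcount
end

section
/- Let G be a simple graph on a finite vertex set V that admits a proper 4-coloring of its vertices (adjacent vertices receive distinct colors), and let H be a hypergraph on V such that every hyperedge of H has at least 3 elements and is a clique in G (every two distinct vertices of the hyperedge are adjacent in G). Then H is 2-colorable. -/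
/-- If the vertices admit a proper 4-coloring of a graph `G`, and every
hyperedge has at least 3 elements and is a clique in `G`, then the hypergraph is
2-colorable. -/
theorem two_colorable_of_four_coloring_cliques
    {α : Type*} [DecidableEq α] (V : Finset α) (G : SimpleGraph α)
    (c4 : α → Fin 4) (hc4 : ∀ u v, G.Adj u v → c4 u ≠ c4 v)
    (H : Finset (Finset α)) (hHV : ∀ e ∈ H, e ⊆ V)
    (hcard : ∀ e ∈ H, 3 ≤ e.card)
    (hclique : ∀ e ∈ H, ∀ u ∈ e, ∀ v ∈ e, u ≠ v → G.Adj u v) :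
    ∃ c : α → Fin 2, ∀ e ∈ H, ¬ ∃ j, ∀ v ∈ e, c v = j := by
  refine ⟨fun v => if (c4 v).val < 2 then 0 else 1, ?_⟩
  rintro e he ⟨j, hj⟩
  obtain ⟨a, b, c, ha, hb, hc, hab, hac, hbc⟩ :=
    Finset.two_lt_card_iff.mp (by have := hcard e he; omega : 2 < e.card)
  have dab : c4 a ≠ c4 b := hc4 _ _ (hclique e he a ha b hb hab)
  have dac : c4 a ≠ c4 c := hc4 _ _ (hclique e he a ha c hc hac)
  have dbc : c4 b ≠ c4 c := hc4 _ _ (hclique e he b hb c hc hbc)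
  have hja := hj a ha
  have hjb := hj b hb
  have hjc := hj c hc
  have vab : (c4 a).val ≠ (c4 b).val := fun h => dab (Fin.ext h)
  have vac : (c4 a).val ≠ (c4 c).val := fun h => dac (Fin.ext h)
  have vbc : (c4 b).val ≠ (c4 c).val := fun h => dbc (Fin.ext h)
  by_cases h1 : (c4 a).val < 2 <;> by_cases h2 : (c4 b).val < 2 <;>
    by_cases h3 : (c4 c).val < 2 <;>
    simp_all <;> omega
end

section
/- Let d ≥ 2 and k ≥ 1 be integers and let n = (d+3)k. Let K be the hypergraph on vertex set {1,…,n} whose hyperedges are: (i) every set of the form g \ {w} where g = {i, i+1, …, i+d+1} for some 1 ≤ i ≤ n−d−1 and w ∈ g with w ≠ i and w ≠ i+d+1; (ii) the set {1, 2, …, d+1}; and (iii) the set {n−d, n−d+1, …, n}. Then the transversal number of K equals 2k, i.e., τ(K) = 2n/(d+3). -/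
/-- The candidate optimal transversal: two vertices in each block of `d+3`. -/
def Tset (d k : ℕ) : Finset ℕ :=
  (Finset.range k).biUnion (fun j => {(d+3)*j+2, (d+3)*j+3})

lemma mem_Tset {d k j v : ℕ} (hj : j < k)
    (hv : v = (d+3)*j+2 ∨ v = (d+3)*j+3) : v ∈ Tset d k := by
  simp only [Tset, Finset.mem_biUnion, Finset.mem_range, Finset.mem_insert,
    Finset.mem_singleton]
  exact ⟨j, hj, hv⟩

lemma succ_block_le {j k : ℕ} (e : ℕ) (h : j < k) : e * j + e ≤ e * k := by
  rw [← Nat.mul_succ]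
  exact Nat.mul_le_mul (Nat.le_refl e) h

lemma card_Tset (d k : ℕ) : (Tset d k).card = 2 * k := by
  have hdisj : ∀ a ∈ Finset.range k, ∀ b ∈ Finset.range k, a ≠ b →
      Disjoint (({(d+3)*a+2, (d+3)*a+3} : Finset ℕ)) ({(d+3)*b+2, (d+3)*b+3}) := by
    intro a _ b _ hab
    rw [Finset.disjoint_left]
    intro x hxa hxb
    simp only [Finset.mem_insert, Finset.mem_singleton] at hxa hxb
    obtain ⟨A, hA⟩ : ∃ A, A = (d+3)*a := ⟨_, rfl⟩
    obtain ⟨B, hB⟩ : ∃ B, B = (d+3)*b := ⟨_, rfl⟩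
    rw [← hA] at hxa
    rw [← hB] at hxb
    rcases Nat.lt_trichotomy a b with h | h | h
    · have h2 : A + (d+3) ≤ B := by rw [hA, hB]; exact succ_block_le _ h
      omega
    · exact hab h
    · have h2 : B + (d+3) ≤ A := by rw [hA, hB]; exact succ_block_le _ h
      omega
  rw [Tset, Finset.card_biUnion hdisj]
  have hc : ∀ j ∈ Finset.range k,
      (({(d+3)*j+2, (d+3)*j+3} : Finset ℕ)).card = 2 := by
    intro j _
    rw [Finset.card_insert_of_notMem (by simp), Finset.card_singleton]
  rw [Finset.sum_congr rfl hc, Finset.sum_const, Finset.card_range, smul_eq_mul,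
    mul_comm]

/-- The facet hypergraph of the boundary of the path-like stacked
`(d+1)`-ball on `n = (d+3)k` vertices has transversal number exactly `2k`. -/
theorem stacked_sphere_transversal_number
    (d k : ℕ) (hd : 2 ≤ d) (hk : 1 ≤ k) (n : ℕ) (hn : n = (d + 3) * k) :
    IsLeast {m : ℕ | ∃ T ⊆ Finset.Icc 1 n,
      ((∀ i w, 1 ≤ i → i + d + 1 ≤ n → w ∈ Finset.Icc i (i + d + 1) →
          w ≠ i → w ≠ i + d + 1 →
          ∃ v ∈ (Finset.Icc i (i + d + 1)).erase w, v ∈ T) ∧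
        (∃ v ∈ Finset.Icc 1 (d + 1), v ∈ T) ∧
        (∃ v ∈ Finset.Icc (n - d) n, v ∈ T)) ∧
      T.card = m} (2 * k) := by
  constructor
  · -- membership: Tset is a transversal of size 2k
    refine ⟨Tset d k, ?_, ⟨⟨?_, ?_, ?_⟩, card_Tset d k⟩⟩
    · -- subset of Icc 1 n
      intro v hv
      simp only [Tset, Finset.mem_biUnion, Finset.mem_range, Finset.mem_insert,
        Finset.mem_singleton] at hv
      obtain ⟨j, hj, hv⟩ := hv
      obtain ⟨A, hA⟩ : ∃ A, A = (d+3)*j := ⟨_, rfl⟩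
      rw [← hA] at hv
      have h2 : A + (d+3) ≤ n := by rw [hA, hn]; exact succ_block_le _ hj
      rw [Finset.mem_Icc]
      omega
    · -- all "interior deleted" facets are hit
      intro i w hi hin hw hwi hwn
      rw [Finset.mem_Icc] at hw
      obtain ⟨q, r, hqr, hrlt⟩ : ∃ q r, (d+3)*q + r = i - 1 ∧ r < d + 3 :=
        ⟨(i-1)/(d+3), (i-1)%(d+3), Nat.div_add_mod _ _, Nat.mod_lt _ (by omega)⟩
      obtain ⟨A, hA⟩ : ∃ A, A = (d+3)*q := ⟨_, rfl⟩
      rw [← hA] at hqr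
      have hB : (d+3)*(q+1) = A + (d+3) := by rw [hA]; ring
      have hq : q < k := by
        by_contra hcon
        push_neg at hcon
        have h2 := Nat.mul_le_mul (Nat.le_refl (d+3)) hcon
        rw [← hA, ← hn] at h2
        omega
      rcases (show r = 0 ∨ r = 1 ∨ r = 2 ∨ r = 3 ∨ 4 ≤ r by omega) with h|h|h|h|h
      · by_cases hwc : w = A + 2
        · exact ⟨A+3, Finset.mem_erase.mpr ⟨by omega,
            Finset.mem_Icc.mpr ⟨by omega, by omega⟩⟩, mem_Tset hq (Or.inr (by rw [hA]))⟩
        · exact ⟨A+2, Finset.mem_erase.mpr ⟨by omega,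
            Finset.mem_Icc.mpr ⟨by omega, by omega⟩⟩, mem_Tset hq (Or.inl (by rw [hA]))⟩
      · exact ⟨A+2, Finset.mem_erase.mpr ⟨by omega,
          Finset.mem_Icc.mpr ⟨by omega, by omega⟩⟩, mem_Tset hq (Or.inl (by rw [hA]))⟩
      · exact ⟨A+3, Finset.mem_erase.mpr ⟨by omega,
          Finset.mem_Icc.mpr ⟨by omega, by omega⟩⟩, mem_Tset hq (Or.inr (by rw [hA]))⟩
      all_goals
        have hq1 : q + 1 < k := by
          by_contra hcon
          push_neg at hcon
          have h2 := Nat.mul_le_mul (Nat.le_refl (d+3)) hcon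
          rw [hB, ← hn] at h2
          omega
      · exact ⟨A+(d+3)+2, Finset.mem_erase.mpr ⟨by omega,
          Finset.mem_Icc.mpr ⟨by omega, by omega⟩⟩, mem_Tset hq1 (Or.inl (by rw [hB]))⟩
      · by_cases hwc : w = A + (d+3) + 2
        · exact ⟨A+(d+3)+3, Finset.mem_erase.mpr ⟨by omega,
            Finset.mem_Icc.mpr ⟨by omega, by omega⟩⟩, mem_Tset hq1 (Or.inr (by rw [hB]))⟩
        · exact ⟨A+(d+3)+2, Finset.mem_erase.mpr ⟨by omega,
            Finset.mem_Icc.mpr ⟨by omega, by omega⟩⟩, mem_Tset hq1 (Or.inl (by rw [hB]))⟩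
    · -- first end facet {1,...,d+1}
      exact ⟨2, Finset.mem_Icc.mpr ⟨by omega, by omega⟩,
        mem_Tset (show 0 < k by omega) (Or.inl (by ring))⟩
    · -- last end facet {n-d,...,n}
      obtain ⟨k', hk'⟩ : ∃ k', k = k' + 1 := ⟨k-1, by omega⟩
      obtain ⟨C, hC⟩ : ∃ C, C = (d+3)*k' := ⟨_, rfl⟩
      have hnC : n = C + (d+3) := by rw [hn, hk', Nat.mul_succ, hC]
      exact ⟨C+3, Finset.mem_Icc.mpr ⟨by omega, by omega⟩,
        mem_Tset (show k' < k by omega) (Or.inr (by rw [hC]))⟩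
  · -- lower bound
    rintro m ⟨T, hTsub, ⟨h1, h2, h3⟩, hcard⟩
    -- each block Icc ((d+3)j+1) ((d+3)j+(d+3)) contains at least two transversal vertices
    have key : ∀ j, j < k →
        1 < (T ∩ Finset.Icc ((d+3)*j+1) ((d+3)*j+(d+3))).card := by
      intro j hj
      obtain ⟨A, hA⟩ : ∃ A, A = (d+3)*j := ⟨_, rfl⟩
      rw [← hA]
      have hAn : A + (d+3) ≤ n := by rw [hA, hn]; exact succ_block_le _ hj
      -- first element u of T in (A+1, A+d+3]
      obtain ⟨u, hu, huT⟩ := h1 (A+2) (A+3) (by omega) (by omega)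
        (Finset.mem_Icc.mpr ⟨by omega, by omega⟩) (by omega) (by omega)
      rw [Finset.mem_erase, Finset.mem_Icc] at hu
      have two : ∃ v ∈ T, v ≠ u ∧ A + 1 ≤ v ∧ v ≤ A + (d+3) := by
        by_cases hc1 : u ≤ A + d + 1
        · -- u is interior of the window [A+1, A+d+2]
          obtain ⟨v, hv, hvT⟩ := h1 (A+1) u (by omega) (by omega)
            (Finset.mem_Icc.mpr ⟨by omega, by omega⟩) (by omega) (by omega)
          rw [Finset.mem_erase, Finset.mem_Icc] at hv
          exact ⟨v, hvT, by omega, by omega, by omega⟩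
        · by_cases hc2 : u = A + d + 2
          · -- u is interior of the window [A+2, A+d+3]
            obtain ⟨v, hv, hvT⟩ := h1 (A+2) u (by omega) (by omega)
              (Finset.mem_Icc.mpr ⟨by omega, by omega⟩) (by omega) (by omega)
            rw [Finset.mem_erase, Finset.mem_Icc] at hv
            exact ⟨v, hvT, by omega, by omega, by omega⟩
          · -- u = A + d + 3; use window [A+1, A+d+2] with w = A+2
            obtain ⟨v, hv, hvT⟩ := h1 (A+1) (A+2) (by omega) (by omega)
              (Finset.mem_Icc.mpr ⟨by omega, by omega⟩) (by omega) (by omega)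
            rw [Finset.mem_erase, Finset.mem_Icc] at hv
            exact ⟨v, hvT, by omega, by omega, by omega⟩
      obtain ⟨v, hvT, hvu, hv1, hv2⟩ := two
      refine Finset.one_lt_card.mpr ⟨u, ?_, v, ?_, by omega⟩
      · exact Finset.mem_inter.mpr ⟨huT, Finset.mem_Icc.mpr ⟨by omega, by omega⟩⟩
      · exact Finset.mem_inter.mpr ⟨hvT, Finset.mem_Icc.mpr ⟨by omega, by omega⟩⟩
    have hdisj : ∀ a ∈ Finset.range k, ∀ b ∈ Finset.range k, a ≠ b →
        Disjoint (T ∩ Finset.Icc ((d+3)*a+1) ((d+3)*a+(d+3)))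
          (T ∩ Finset.Icc ((d+3)*b+1) ((d+3)*b+(d+3))) := by
      intro a _ b _ hab
      rw [Finset.disjoint_left]
      intro x hxa hxb
      rw [Finset.mem_inter, Finset.mem_Icc] at hxa hxb
      obtain ⟨A, hA⟩ : ∃ A, A = (d+3)*a := ⟨_, rfl⟩
      obtain ⟨B, hB⟩ : ∃ B, B = (d+3)*b := ⟨_, rfl⟩
      rw [← hA] at hxa
      rw [← hB] at hxb
      rcases Nat.lt_trichotomy a b with h | h | h
      · have h2 : A + (d+3) ≤ B := by rw [hA, hB]; exact succ_block_le _ h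
        omega
      · exact hab h
      · have h2 : B + (d+3) ≤ A := by rw [hA, hB]; exact succ_block_le _ h
        omega
    have hsum := Finset.card_biUnion hdisj
    have hsub : ((Finset.range k).biUnion
        (fun j => T ∩ Finset.Icc ((d+3)*j+1) ((d+3)*j+(d+3)))).card ≤ T.card :=
      Finset.card_le_card (Finset.biUnion_subset.mpr
        (fun j _ => Finset.inter_subset_left))
    have hge : 2 * k ≤ ∑ j ∈ Finset.range k,
        (T ∩ Finset.Icc ((d+3)*j+1) ((d+3)*j+(d+3))).card := by
      calc 2 * k = ∑ _j ∈ Finset.range k, 2 := by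
            rw [Finset.sum_const, Finset.card_range, smul_eq_mul, mul_comm]
        _ ≤ _ := Finset.sum_le_sum (fun j hj => key j (Finset.mem_range.mp hj))
    omega
end

section
/- For all integers d ≥ 3 and n ≥ d+1, the Gale hypergraph G(d,n) is 2-colorable; in fact, the parity coloring assigning to each vertex i ∈ {1,…,n} the parity of i is a proper 2-coloring, i.e., no hyperedge of G(d,n) consists entirely of even numbers or entirely of odd numbers. -/
/-- `f` is a hyperedge of the Gale hypergraph `G(d,n)`: a `d`-element subset of
`{1, …, n}` satisfying Gale's evenness condition. -/
def GaleEdge (d n : ℕ) (f : Finset ℕ) : Prop :=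
  f ⊆ Finset.Icc 1 n ∧ f.card = d ∧
  ∀ i ∈ Finset.Icc 1 n, ∀ j ∈ Finset.Icc 1 n, i < j → i ∉ f → j ∉ f →
    Even ((f.filter fun x => i < x ∧ x < j).card)

lemma gale_aux (d n : ℕ) (hd : 3 ≤ d) (f : Finset ℕ) (hf : GaleEdge d n f)
    (hpar : ∀ x ∈ f, ∀ y ∈ f, (Even x ↔ Even y)) : False := by
  obtain ⟨hsub, hcard, hgale⟩ := hf
  have hne : f.Nonempty := by rw [← Finset.card_pos]; omega
  set a1 := f.min' hne with ha1
  have ha1f : a1 ∈ f := f.min'_mem hne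
  have hne2 : (f.erase a1).Nonempty := by
    rw [← Finset.card_pos, Finset.card_erase_of_mem ha1f]; omega
  set a2 := (f.erase a1).min' hne2 with ha2
  have ha2f' : a2 ∈ f.erase a1 := (f.erase a1).min'_mem hne2
  have ha2f : a2 ∈ f := Finset.mem_of_mem_erase ha2f'
  have h12 : a1 < a2 :=
    lt_of_le_of_ne (f.min'_le _ ha2f) (Finset.ne_of_mem_erase ha2f').symm
  have hmin2 : ∀ x ∈ f, a1 < x → a2 ≤ x := by
    intro x hx hlt
    exact Finset.min'_le _ _ (Finset.mem_erase.mpr ⟨by omega, hx⟩)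
  have hpar12 : Even a1 ↔ Even a2 := hpar a1 ha1f a2 ha2f
  have hne12 : a2 ≠ a1 + 1 := by
    intro h
    rw [h, Nat.even_add_one] at hpar12
    tauto
  have h12' : a1 + 2 ≤ a2 := by omega
  have ha3 : ∃ a3 ∈ f, a2 < a3 := by
    by_contra h
    push_neg at h
    have hsub2 : f ⊆ {a1, a2} := by
      intro x hx
      rcases lt_trichotomy x a1 with h1 | h1 | h1
      · exact absurd (f.min'_le x hx) (by omega)
      · simp [h1]
      · have h2 := hmin2 x hx h1
        have h3 := h x hx
        simp only [Finset.mem_insert, Finset.mem_singleton]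
        omega
    have hc1 := Finset.card_le_card hsub2
    have hc2 : ({a1, a2} : Finset ℕ).card ≤ 2 :=
      (Finset.card_insert_le _ _).trans (by simp)
    omega
  obtain ⟨a3, ha3f, h23⟩ := ha3
  have ha3n : a3 ≤ n := (Finset.mem_Icc.mp (hsub ha3f)).2
  have hi : a1 + 1 ∈ Finset.Icc 1 n := Finset.mem_Icc.mpr ⟨by omega, by omega⟩
  have hj : a2 + 1 ∈ Finset.Icc 1 n := Finset.mem_Icc.mpr ⟨by omega, by omega⟩
  have hinf : a1 + 1 ∉ f := by
    intro h
    have := hmin2 _ h (by omega)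
    omega
  have hjnf : a2 + 1 ∉ f := by
    intro h
    have h' := hpar a2 ha2f (a2 + 1) h
    rw [Nat.even_add_one] at h'
    tauto
  have hev := hgale _ hi _ hj (by omega) hinf hjnf
  have hfilt : f.filter (fun x => a1 + 1 < x ∧ x < a2 + 1) = {a2} := by
    ext x
    simp only [Finset.mem_filter, Finset.mem_singleton]
    constructor
    · rintro ⟨hx, h1, h2⟩
      have := hmin2 x hx (by omega)
      omega
    · rintro rfl
      exact ⟨ha2f, by omega, by omega⟩
  rw [hfilt] at hev
  simp at hev

/-- For `d ≥ 3` and `n ≥ d+1`, the parity coloring is a proper 2-coloring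
of the Gale hypergraph `G(d,n)`: no hyperedge consists entirely of even numbers or
entirely of odd numbers. -/
theorem gale_parity_two_coloring
    (d n : ℕ) (hd : 3 ≤ d) (hn : d + 1 ≤ n)
    (f : Finset ℕ) (hf : GaleEdge d n f) :
    (∃ x ∈ f, Even x) ∧ (∃ x ∈ f, Odd x) := by
  constructor
  · by_contra h
    push_neg at h
    exact gale_aux d n hd f hf fun x hx y hy => iff_of_false (h x hx) (h y hy)
  · by_contra h
    push_neg at h
    simp only [Nat.not_odd_iff_even] at h
    exact gale_aux d n hd f hf fun x hx y hy => iff_of_true (h x hx) (h y hy)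
end

section
/- For every even integer d ≥ 2 and every integer n ≥ d+1, the Gale hypergraph G(d,n) has transversal number τ(G(d,n)) = ⌈(n−d)/2⌉ + 1. -/
open Finset

theorem GaleEdge.pred_mem_or_succ_mem {d n : ℕ} {f : Finset ℕ} (hf : GaleEdge d n f) {x : ℕ}
    (hx : x ∈ f) (h1x : 1 < x) (hxn : x < n) : x - 1 ∈ f ∨ x + 1 ∈ f := by
  by_contra! h
  have hodd := hf.2.2 (x - 1) (mem_Icc.2 ⟨by omega, by omega⟩) (x + 1)
    (mem_Icc.2 ⟨by omega, by omega⟩) (by omega) h.1 h.2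
  have hx : f.filter (fun y => x - 1 < y ∧ y < x + 1) = {x} := by
    ext y
    simp only [mem_filter, mem_singleton]
    exact ⟨fun h => by omega, by rintro rfl; exact ⟨hx, by omega, by omega⟩⟩
  rw [hx, card_singleton] at hodd
  exact Nat.not_even_one hodd

def galeTransversal (d n : ℕ) : Finset ℕ := insert n ((Icc (d / 2) (n / 2)).image (2 * ·))

section galeTransversal

variable {d n : ℕ}

theorem mem_galeTransversal (heven : Even d) {y : ℕ} :
    y ∈ galeTransversal d n ↔ y = n ∨ Even y ∧ d ≤ y ∧ y ≤ n := by
  obtain ⟨e, rfl⟩ := heven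
  simp only [galeTransversal, mem_insert, mem_image, mem_Icc, Nat.even_iff]
  constructor
  · rintro (h | ⟨k, hk, rfl⟩) <;> omega
  · rintro (h | h)
    · exact Or.inl h
    · exact Or.inr ⟨y / 2, by omega, by omega⟩

theorem galeTransversal_subset (hd : 0 < d) (heven : Even d) (hn : 0 < n) :
    galeTransversal d n ⊆ Icc 1 n := fun y hy => by
  rw [mem_galeTransversal heven] at hy
  exact mem_Icc.2 (by omega)

theorem card_galeTransversal (heven : Even d) (hdn : d ≤ n) :
    #(galeTransversal d n) = (n - d + 1) / 2 + 1 := by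
  have himage : #((Icc (d / 2) (n / 2)).image (2 * ·)) = n / 2 + 1 - d / 2 := by
    rw [card_image_of_injective _ (mul_right_injective₀ two_ne_zero), Nat.card_Icc]
  rw [Nat.even_iff] at heven
  rw [galeTransversal]
  by_cases hn : n % 2 = 0
  · rw [insert_eq_of_mem (mem_image.2 ⟨n / 2, mem_Icc.2 ⟨by omega, le_rfl⟩, by omega⟩), himage]
    omega
  · rw [card_insert_of_notMem (by simp only [mem_image, not_exists]; omega), himage]
    omega

theorem exists_mem_galeTransversal (hd : 0 < d) (heven : Even d) {f : Finset ℕ}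
    (hf : GaleEdge d n f) : ∃ v ∈ f, v ∈ galeTransversal d n := by
  have hne : f.Nonempty := card_pos.1 (hf.2.1 ▸ hd)
  set x := f.max' hne
  have hxf : x ∈ f := f.max'_mem hne
  have hdx : d ≤ x := by
    have := card_le_card (show f ⊆ Icc 1 x from
      fun y hy => mem_Icc.2 ⟨(mem_Icc.1 (hf.1 hy)).1, f.le_max' y hy⟩)
    simpa [hf.2.1] using this
  have hxn := (mem_Icc.1 (hf.1 hxf)).2
  by_cases hxT : x ∈ galeTransversal d n
  · exact ⟨x, hxf, hxT⟩
  simp only [mem_galeTransversal heven, Nat.even_iff] at hxT ⊢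
  have := Nat.even_iff.1 heven
  have hsucc : x + 1 ∉ f := fun h => by have := f.le_max' _ h; omega
  exact ⟨x - 1, (hf.pred_mem_or_succ_mem hxf (by omega) (by omega)).resolve_right hsucc,
    Or.inr ⟨by omega, by omega, by omega⟩⟩

end galeTransversal

/-- Gale's condition with no constraint from the right: the maximal runs of `f`, except one
starting at `1`, have even length. -/
def LeftGaleEven (f : Finset ℕ) : Prop :=
  ∀ ⦃i j : ℕ⦄, 0 < i → i < j → i ∉ f → j ∉ f → Even #(f.filter fun x => i < x ∧ x < j)

namespace LeftGaleEven

theorem empty : LeftGaleEven ∅ := by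
  intro i j _ _ _ _
  simp

theorem singleton_one : LeftGaleEven {1} := by
  intro i j hi _ hi1 _
  rw [filter_singleton, if_neg (by simp at hi1; omega)]
  simp

theorem insert_pair {f : Finset ℕ} (hf : LeftGaleEven f) {p : ℕ} (hp : p ∉ f)
    (hp1 : p + 1 ∉ f) :
    LeftGaleEven (insert p (insert (p + 1) f)) := by
  intro i j hi hij hif hjf
  simp only [mem_insert, not_or] at hif hjf
  have heven := hf hi hij hif.2.2 hjf.2.2
  rw [filter_insert, filter_insert]
  by_cases hpij : i < p ∧ p < j
  · have hp1ij : i < p + 1 ∧ p + 1 < j := by omega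
    rw [if_pos hpij, if_pos hp1ij, card_insert_of_notMem (by simp [hp]),
      card_insert_of_notMem (by simp [hp1])]
    exact heven.add_one.add_one
  · rw [if_neg hpij, if_neg (by omega)]
    exact heven

theorem galeEdge_union_Icc {f : Finset ℕ} (hf : LeftGaleEven f) {x n σ : ℕ}
    (hfx : f ⊆ Icc 1 x) (hσ : x + σ ≤ n) :
    GaleEdge (#f + σ) n (f ∪ Icc (n + 1 - σ) n) := by
  have hfS : Disjoint f (Icc (n + 1 - σ) n) := by
    refine disjoint_left.2 fun y hy hyS => ?_
    have := mem_Icc.1 (hfx hy)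
    have := mem_Icc.1 hyS
    omega
  refine ⟨union_subset (hfx.trans (Icc_subset_Icc_right (by omega)))
    (Icc_subset_Icc_left (by omega)), ?_, ?_⟩
  · rw [card_union_of_disjoint hfS, Nat.card_Icc]
    omega
  · intro i hi j hj hij hif hjf
    simp only [mem_union, mem_Icc, not_or] at hif hjf hi hj
    have hS : (Icc (n + 1 - σ) n).filter (fun y => i < y ∧ y < j) = ∅ :=
      filter_eq_empty_iff.2 fun y hy => by simp only [mem_Icc] at hy; omega
    rw [filter_union, hS, union_empty]
    exact hf (by omega) hij hif.1 hjf.1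

end LeftGaleEven

theorem subset_Icc_of_succ_notMem {T : Finset ℕ} {y : ℕ} (hT : T ⊆ Icc 1 (y + 1))
    (hy : y + 1 ∉ T) : T ⊆ Icc 1 y := fun z hz => by
  have := mem_Icc.1 (hT hz)
  have : z ≠ y + 1 := fun h => hy (h ▸ hz)
  exact mem_Icc.2 (by omega)

def LeftGaleAvoiding (T : Finset ℕ) (x c : ℕ) : Prop :=
  ∃ f ⊆ Icc 1 x, LeftGaleEven f ∧ Disjoint f T ∧ #f = c

namespace LeftGaleAvoiding

variable {T : Finset ℕ} {x y c : ℕ}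

theorem zero : LeftGaleAvoiding T x 0 :=
  ⟨∅, empty_subset _, .empty, disjoint_empty_left _, rfl⟩

theorem one (h1 : 1 ∉ T) (hx : 0 < x) : LeftGaleAvoiding T x 1 :=
  ⟨{1}, singleton_subset_iff.2 (mem_Icc.2 ⟨le_rfl, hx⟩), .singleton_one,
    disjoint_singleton_left.2 h1, rfl⟩

theorem mono (h : LeftGaleAvoiding T y c) (hyx : y ≤ x) : LeftGaleAvoiding T x c :=
  let ⟨f, hfy, hf, hfT, hfc⟩ := h
  ⟨f, hfy.trans (Icc_subset_Icc_right hyx), hf, hfT, hfc⟩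

theorem of_erase (h : LeftGaleAvoiding (T.erase (y + 1)) y c) : LeftGaleAvoiding T y c :=
  let ⟨f, hfy, hf, hfT, hfc⟩ := h
  ⟨f, hfy, hf, disjoint_of_erase_right (fun h => by have := mem_Icc.1 (hfy h); omega) hfT, hfc⟩

theorem add_pair (h : LeftGaleAvoiding T y c) (h1 : y + 1 ∉ T) (h2 : y + 2 ∉ T) :
    LeftGaleAvoiding T (y + 2) (c + 2) := by
  obtain ⟨f, hfy, hf, hfT, rfl⟩ := h
  have hy1 : y + 1 ∉ f := fun h => by have := mem_Icc.1 (hfy h); omega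
  have hy2 : y + 2 ∉ f := fun h => by have := mem_Icc.1 (hfy h); omega
  refine ⟨insert (y + 1) (insert (y + 2) f), ?_, hf.insert_pair hy1 hy2,
    disjoint_insert_left.2 ⟨h1, disjoint_insert_left.2 ⟨h2, hfT⟩⟩, ?_⟩
  · exact insert_subset (by simp) (insert_subset (by simp)
      (hfy.trans (Icc_subset_Icc_right (by omega))))
  · rw [card_insert_of_notMem (by simp [hy1]), card_insert_of_notMem hy2]

theorem of_card_le (x : ℕ) (hT : T ⊆ Icc 1 x)
    (hc : Even c ∨ 1 ∉ T)
    (hbound : c + 2 * #T ≤ x + (if x ∈ T then 1 else 0) + (if 1 ∈ T then 1 else 0)) :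
    LeftGaleAvoiding T x c := by
  induction x using Nat.strong_induction_on generalizing T c with
  | _ x ih =>
  have hT1 : 1 ∈ T → 1 ≤ #T := fun h => card_pos.2 ⟨1, h⟩
  rcases Nat.lt_or_ge c 2 with hc2 | hc2
  · interval_cases c
    · exact .zero
    · refine .one (hc.resolve_left (by decide)) (Nat.pos_of_ne_zero ?_)
      rintro rfl
      simp_all
  by_cases hxT : x ∈ T
  · obtain ⟨y, rfl⟩ : ∃ y, x = y + 1 := ⟨x - 1, by have := mem_Icc.1 (hT hxT); omega⟩
    have hy : y ≠ 0 := by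
      rintro rfl
      simp only [zero_add, hxT, if_true] at hbound
      have := hT1 hxT
      omega
    have h1 : 1 ∈ T.erase (y + 1) ↔ 1 ∈ T := by rw [mem_erase]; exact and_iff_right (by omega)
    have hy1 : y ∈ T.erase (y + 1) ↔ y ∈ T := by rw [mem_erase]; exact and_iff_right (by omega)
    refine (ih y (by omega) (T := T.erase (y + 1))
      (subset_Icc_of_succ_notMem ((erase_subset _ _).trans hT) (notMem_erase _ _))
      (by rwa [h1]) ?_).of_erase.mono (by omega)
    have := card_pos.2 ⟨_, hxT⟩
    simp only [card_erase_of_mem hxT, h1, hy1]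
    split_ifs at hbound ⊢ <;> omega
  by_cases hx1T : x - 1 ∈ T
  · obtain ⟨y, rfl⟩ : ∃ y, x = y + 1 := ⟨x - 1, by have := mem_Icc.1 (hT hx1T); omega⟩
    simp only [Nat.add_sub_cancel] at hx1T
    refine (ih y (by omega) (subset_Icc_of_succ_notMem hT hxT) hc ?_).mono (by omega)
    simp only [hxT, hx1T, if_false, if_true] at hbound ⊢
    omega
  · have hx2 : 2 ≤ x := by
      simp only [hxT, if_false] at hbound
      split_ifs at hbound with h1T
      · have := hT1 h1T; omega
      · omega
    obtain ⟨y, rfl⟩ : ∃ y, x = y + 2 := ⟨x - 2, by omega⟩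
    replace hx1T : y + 1 ∉ T := by simpa using hx1T
    obtain ⟨c, rfl⟩ : ∃ c', c = c' + 2 := ⟨c - 2, by omega⟩
    refine (ih y (by omega) (subset_Icc_of_succ_notMem (subset_Icc_of_succ_notMem hT hxT) hx1T)
      (hc.imp_left (Nat.even_add.1 · |>.2 even_two)) ?_).add_pair hx1T hxT
    simp only [hxT, if_false] at hbound
    split_ifs at hbound ⊢ <;> omega

end LeftGaleAvoiding

theorem exists_galeEdge_disjoint {d n : ℕ} (heven : Even d) (hdn : d ≤ n) {T : Finset ℕ}
    (hT : T ⊆ Icc 1 n) (hcard : d + 2 * #T ≤ n + 1) : ∃ f, GaleEdge d n f ∧ Disjoint f T := by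
  obtain ⟨x, hTx, hxn, hxT⟩ : ∃ x, T ⊆ Icc 1 x ∧ x ≤ n ∧ (x ∈ T ∨ x + d ≤ n) := by
    rcases T.eq_empty_or_nonempty with rfl | hne
    · exact ⟨0, empty_subset _, by omega, Or.inr (by omega)⟩
    · refine ⟨T.max' hne, fun y hy => mem_Icc.2 ⟨(mem_Icc.1 (hT hy)).1, T.le_max' y hy⟩,
        (mem_Icc.1 (hT (T.max'_mem hne))).2, Or.inl (T.max'_mem hne)⟩
  obtain ⟨c, σ, rfl, hσ, f, hfx, hf, hfT, rfl⟩ :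
      ∃ c σ, c + σ = d ∧ x + σ ≤ n ∧ LeftGaleAvoiding T x c := by
    by_cases hsmall : x + d ≤ n
    · exact ⟨0, d, zero_add d, hsmall, .zero⟩
    have hxT : x ∈ T := hxT.resolve_right hsmall
    rw [Nat.even_iff] at heven
    by_cases hpar : Even (x + d - n) ∨ 1 ∉ T
    · refine ⟨x + d - n, n - x, by omega, by omega, .of_card_le x hTx hpar ?_⟩
      simp only [hxT, if_true]
      split_ifs <;> omega
    · -- With `1 ∈ T` there is no initial run, so an odd `c` is rounded up at the final run's
      -- expense.
      rw [not_or, not_not, Nat.not_even_iff_odd, Nat.odd_iff] at hpar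
      refine ⟨x + d - n + 1, n - x - 1, by omega, by omega, .of_card_le x hTx
        (Or.inl (Nat.even_iff.2 (by omega))) ?_⟩
      simp only [hxT, hpar.2, if_true]
      omega
  refine ⟨f ∪ Icc (n + 1 - σ) n, hf.galeEdge_union_Icc hfx hσ,
    disjoint_union_left.2 ⟨hfT, disjoint_left.2 fun y hy hyT => ?_⟩⟩
  have := mem_Icc.1 hy
  have := mem_Icc.1 (hTx hyT)
  omega


/-- For even `d ≥ 2` and `n ≥ d+1`, the Gale hypergraph `G(d,n)` has
transversal number `⌈(n-d)/2⌉ + 1`. -/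
theorem gale_even_transversal_number
    (d n : ℕ) (hd : 2 ≤ d) (heven : Even d) (hn : d + 1 ≤ n) :
    IsLeast {m : ℕ | ∃ T ⊆ Finset.Icc 1 n,
        (∀ f, GaleEdge d n f → ∃ v ∈ f, v ∈ T) ∧ T.card = m}
      ((n - d + 1) / 2 + 1) := by
  refine ⟨⟨galeTransversal d n, galeTransversal_subset (by omega) heven (by omega),
    fun f hf => exists_mem_galeTransversal (by omega) heven hf,
    card_galeTransversal heven (by omega)⟩, ?_⟩
  rintro m ⟨T, hT, hcover, rfl⟩
  by_contra! hsmall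
  obtain ⟨f, hf, hfT⟩ := exists_galeEdge_disjoint heven (by omega) hT (by omega)
  obtain ⟨v, hvf, hvT⟩ := hcover f hf
  exact disjoint_left.1 hfT hvf hvT
end
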